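/- The vertex-cover lower-bound graph G_{x,y} has a vertex cover of cardinality 4(k − 1) + 4·log k if and only if x and y are not disjoint, i.e., if and only if there exists a pair (i,j) ∈ {0,…,k−1}² with x[i,j] = y[i,j] = 1. -/

import Mathlib

/-- Vertices of the vertex-cover lower-bound graph.  The side `s : Bool`
distinguishes Alice (`false`, the `a`'s) from Bob (`true`, the `b`'s), and
`ℓ : Bool` distinguishes index `1` (`false`) from index `2` (`true`).
So `node false false i = a_1^i`, `node true true i = b_2^i`,
`f s ℓ h = f_S^h` and `t s ℓ h = t_S^h` for the corresponding set `S`. -/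
inductive VCVertex (k logk : ℕ) where
  | node (s ℓ : Bool) (i : Fin k)
  | f (s ℓ : Bool) (h : Fin logk)
  | t (s ℓ : Bool) (h : Fin logk)
deriving DecidableEq

/-- Base relation generating the edges of the vertex-cover lower-bound graph
`G_{x,y}`: the four cliques; each node joined to exactly its bit-nodes `bin`;
the 4-cycles `(f_{Aℓ}^h, t_{Aℓ}^h, f_{Bℓ}^h, t_{Bℓ}^h)`; and the input edges
`(a_1^i, a_2^j)` iff `x i j = 0` and `(b_1^i, b_2^j)` iff `y i j = 0`. -/
def vcRel (k logk : ℕ) (x y : Fin k → Fin k → Bool) (u v : VCVertex k logk) : Prop :=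
  (∃ (s ℓ : Bool) (i j : Fin k), i ≠ j ∧
    u = VCVertex.node s ℓ i ∧ v = VCVertex.node s ℓ j) ∨
  (∃ (s ℓ : Bool) (i : Fin k) (h : Fin logk), u = VCVertex.node s ℓ i ∧
    v = if i.val.testBit h.val then VCVertex.t s ℓ h else VCVertex.f s ℓ h) ∨
  (∃ (ℓ : Bool) (h : Fin logk),
    (u = VCVertex.f false ℓ h ∧ v = VCVertex.t false ℓ h) ∨
    (u = VCVertex.t false ℓ h ∧ v = VCVertex.f true ℓ h) ∨
    (u = VCVertex.f true ℓ h ∧ v = VCVertex.t true ℓ h) ∨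
    (u = VCVertex.t true ℓ h ∧ v = VCVertex.f false ℓ h)) ∨
  (∃ i j : Fin k, x i j = false ∧
    u = VCVertex.node false false i ∧ v = VCVertex.node false true j) ∨
  (∃ i j : Fin k, y i j = false ∧
    u = VCVertex.node true false i ∧ v = VCVertex.node true true j)

/-- The vertex-cover lower-bound graph `G_{x,y}`. -/
def vcGraph (k logk : ℕ) (x y : Fin k → Fin k → Bool) : SimpleGraph (VCVertex k logk) :=
  SimpleGraph.fromRel (vcRel k logk x y)

/-- `U` is a vertex cover: every edge has at least one endpoint in `U`. -/
def IsVertexCover {V : Type*} (G : SimpleGraph V) (U : Set V) : Prop :=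
  ∀ u v, G.Adj u v → u ∈ U ∨ v ∈ U


deriving instance Fintype for VCVertex

namespace VCAux
variable {k logk : ℕ} {x y : Fin k → Fin k → Bool}

def bitNode (s ℓ : Bool) (c : Fin k) (h : Fin logk) : VCVertex k logk :=
  if c.val.testBit h.val then .t s ℓ h else .f s ℓ h

def piece : VCVertex k logk → (Bool × Bool) ⊕ (Bool × Fin logk)
  | .node s ℓ _ => .inl (s, ℓ)
  | .f _ ℓ h => .inr (ℓ, h)
  | .t _ ℓ h => .inr (ℓ, h)

def cycFib (F : Finset (VCVertex k logk)) (ℓ : Bool) (h : Fin logk) : Finset (VCVertex k logk) :=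
  F.filter (fun v => v = .f false ℓ h ∨ v = .t false ℓ h ∨ v = .f true ℓ h ∨ v = .t true ℓ h)

lemma card_decomp (F : Finset (VCVertex k logk)) :
    F.card = (∑ q : Bool × Bool,
        (Finset.univ.filter fun m : Fin k => VCVertex.node q.1 q.2 m ∈ F).card)
      + ∑ q : Bool × Fin logk, (cycFib F q.1 q.2).card := by
  classical
  rw [Finset.card_eq_sum_card_fiberwise (f := piece) (t := Finset.univ)
    (fun x _ => Finset.mem_univ _), Fintype.sum_sum_type]
  congr 1
  · refine Finset.sum_congr rfl fun q _ => ?_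
    rw [show F.filter (fun v => piece v = Sum.inl q)
        = (Finset.univ.filter fun m => VCVertex.node q.1 q.2 m ∈ F).image
            (fun m => VCVertex.node q.1 q.2 m) from ?_]
    · rw [Finset.card_image_of_injective _ (fun a b hab => by simpa using hab)]
    · ext v
      rw [Finset.mem_filter]
      rcases v with ⟨s,ℓ,m⟩|⟨s,ℓ,h⟩|⟨s,ℓ,h⟩ <;>
        simp [piece, Prod.ext_iff] <;> aesop
  · refine Finset.sum_congr rfl fun q _ => ?_
    congr 1
    ext v
    rw [Finset.mem_filter]
    rcases v with ⟨s,ℓ,m⟩|⟨s,ℓ,h⟩|⟨s,ℓ,h⟩ <;> cases s <;>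
      simp [piece, cycFib, Prod.ext_iff] <;> aesop

lemma vc_adj {u v : VCVertex k logk} :
    (vcGraph k logk x y).Adj u v ↔ u ≠ v ∧ (vcRel k logk x y u v ∨ vcRel k logk x y v u) :=
  SimpleGraph.fromRel_adj _ _ _

lemma adj_clique {s ℓ : Bool} {i j : Fin k} (hij : i ≠ j) :
    (vcGraph k logk x y).Adj (.node s ℓ i) (.node s ℓ j) :=
  vc_adj.2 ⟨by simp [hij], Or.inl <| Or.inl ⟨s, ℓ, i, j, hij, rfl, rfl⟩⟩

lemma adj_bin (s ℓ : Bool) (i : Fin k) (h : Fin logk) :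
    (vcGraph k logk x y).Adj (.node s ℓ i) (bitNode s ℓ i h) :=
  vc_adj.2 ⟨by unfold bitNode; split <;> simp,
    Or.inl <| Or.inr <| Or.inl ⟨s, ℓ, i, h, rfl, rfl⟩⟩

lemma adj_cyc1 (ℓ : Bool) (h : Fin logk) :
    (vcGraph k logk x y).Adj (.f false ℓ h) (.t false ℓ h) :=
  vc_adj.2 ⟨by simp, Or.inl <| Or.inr <| Or.inr <| Or.inl ⟨ℓ, h, Or.inl ⟨rfl, rfl⟩⟩⟩

lemma adj_cyc2 (ℓ : Bool) (h : Fin logk) :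
    (vcGraph k logk x y).Adj (.t false ℓ h) (.f true ℓ h) :=
  vc_adj.2 ⟨by simp, Or.inl <| Or.inr <| Or.inr <| Or.inl ⟨ℓ, h, Or.inr <| Or.inl ⟨rfl, rfl⟩⟩⟩

lemma adj_cyc3 (ℓ : Bool) (h : Fin logk) :
    (vcGraph k logk x y).Adj (.f true ℓ h) (.t true ℓ h) :=
  vc_adj.2 ⟨by simp, Or.inl <| Or.inr <| Or.inr <| Or.inl ⟨ℓ, h, Or.inr <| Or.inr <| Or.inl ⟨rfl, rfl⟩⟩⟩

lemma adj_cyc4 (ℓ : Bool) (h : Fin logk) :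
    (vcGraph k logk x y).Adj (.t true ℓ h) (.f false ℓ h) :=
  vc_adj.2 ⟨by simp, Or.inl <| Or.inr <| Or.inr <| Or.inl ⟨ℓ, h, Or.inr <| Or.inr <| Or.inr ⟨rfl, rfl⟩⟩⟩

lemma adj_x {i j : Fin k} (hx : x i j = false) :
    (vcGraph k logk x y).Adj (.node false false i) (.node false true j) :=
  vc_adj.2 ⟨by simp, Or.inl <| Or.inr <| Or.inr <| Or.inr <| Or.inl ⟨i, j, hx, rfl, rfl⟩⟩

lemma adj_y {i j : Fin k} (hy : y i j = false) :
    (vcGraph k logk x y).Adj (.node true false i) (.node true true j) :=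
  vc_adj.2 ⟨by simp, Or.inl <| Or.inr <| Or.inr <| Or.inr <| Or.inr ⟨i, j, hy, rfl, rfl⟩⟩

def exIdx (i j : Fin k) (ℓ : Bool) : Fin k := if ℓ then j else i

def coverF (k logk : ℕ) (i j : Fin k) : Finset (VCVertex k logk) :=
  ((Finset.univ : Finset (Bool × Bool × Fin k)).filter
      (fun p => p.2.2 ≠ exIdx i j p.2.1)).image (fun p => VCVertex.node p.1 p.2.1 p.2.2)
  ∪ (Finset.univ : Finset (Bool × Bool × Fin logk)).image
      (fun p => bitNode p.1 p.2.1 (exIdx i j p.2.1) p.2.2)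

lemma bitNode_ne_node (s ℓ a b : Bool) (c : Fin k) (h : Fin logk) (m : Fin k) :
    bitNode s ℓ c h ≠ (.node a b m : VCVertex k logk) := by
  unfold bitNode; split <;> simp

lemma bitNode_eq_t_iff {a b s ℓ : Bool} {c : Fin k} {g h : Fin logk} :
    (bitNode a b c g : VCVertex k logk) = .t s ℓ h ↔
      a = s ∧ b = ℓ ∧ g = h ∧ c.val.testBit g.val = true := by
  unfold bitNode; split <;> simp_all <;> tauto

lemma bitNode_eq_f_iff {a b s ℓ : Bool} {c : Fin k} {g h : Fin logk} :
    (bitNode a b c g : VCVertex k logk) = .f s ℓ h ↔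
      a = s ∧ b = ℓ ∧ g = h ∧ c.val.testBit g.val = false := by
  unfold bitNode; split <;> simp_all <;> tauto

lemma mem_coverF_node {s ℓ : Bool} {m i j : Fin k} :
    (VCVertex.node s ℓ m : VCVertex k logk) ∈ coverF k logk i j ↔ m ≠ exIdx i j ℓ := by
  simp only [coverF, Finset.mem_union, Finset.mem_image, Finset.mem_filter, Finset.mem_univ,
    true_and]
  constructor
  · rintro (⟨⟨a,b,n⟩, hn, hEq⟩ | ⟨⟨a,b,g⟩, hEq⟩)
    · simp only [VCVertex.node.injEq] at hEq
      obtain ⟨rfl, rfl, rfl⟩ := hEq; exact hn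
    · exact absurd hEq (bitNode_ne_node _ _ _ _ _ _ _)
  · intro hm; exact Or.inl ⟨⟨s, ℓ, m⟩, hm, rfl⟩

lemma mem_coverF_t {s ℓ : Bool} {i j : Fin k} {h : Fin logk} :
    (VCVertex.t s ℓ h : VCVertex k logk) ∈ coverF k logk i j ↔
      (exIdx i j ℓ).val.testBit h.val = true := by
  simp only [coverF, Finset.mem_union, Finset.mem_image, Finset.mem_filter, Finset.mem_univ,
    true_and]
  constructor
  · rintro (⟨⟨a,b,n⟩, _, hEq⟩ | ⟨⟨a,b,g⟩, hEq⟩)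
    · exact absurd hEq (by simp)
    · rw [bitNode_eq_t_iff] at hEq
      obtain ⟨rfl, rfl, rfl, hb⟩ := hEq; exact hb
  · intro hb
    exact Or.inr ⟨⟨s, ℓ, h⟩, by rw [bitNode_eq_t_iff]; exact ⟨rfl, rfl, rfl, hb⟩⟩

lemma mem_coverF_f {s ℓ : Bool} {i j : Fin k} {h : Fin logk} :
    (VCVertex.f s ℓ h : VCVertex k logk) ∈ coverF k logk i j ↔
      (exIdx i j ℓ).val.testBit h.val = false := by
  simp only [coverF, Finset.mem_union, Finset.mem_image, Finset.mem_filter, Finset.mem_univ,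
    true_and]
  constructor
  · rintro (⟨⟨a,b,n⟩, _, hEq⟩ | ⟨⟨a,b,g⟩, hEq⟩)
    · exact absurd hEq (by simp)
    · rw [bitNode_eq_f_iff] at hEq
      obtain ⟨rfl, rfl, rfl, hb⟩ := hEq; exact hb
  · intro hb
    exact Or.inr ⟨⟨s, ℓ, h⟩, by rw [bitNode_eq_f_iff]; exact ⟨rfl, rfl, rfl, hb⟩⟩

lemma bitNode_mem_coverF (s ℓ : Bool) (i j : Fin k) (h : Fin logk) :
    (bitNode s ℓ (exIdx i j ℓ) h : VCVertex k logk) ∈ coverF k logk i j :=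
  Finset.mem_union_right _ (Finset.mem_image.2 ⟨⟨s, ℓ, h⟩, Finset.mem_univ _, rfl⟩)

lemma cover_rel {i j : Fin k} (hx : x i j = true) (hy : y i j = true)
    {u v : VCVertex k logk} (hrel : vcRel k logk x y u v) :
    u ∈ coverF k logk i j ∨ v ∈ coverF k logk i j := by
  obtain ⟨s, ℓ, m, m', hmm, rfl, rfl⟩ | ⟨s, ℓ, m, h, rfl, rfl⟩ | ⟨ℓ, h, hc⟩ |
      ⟨m, m', hxm, rfl, rfl⟩ | ⟨m, m', hym, rfl, rfl⟩ := hrel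
  · by_cases hm : m = exIdx i j ℓ
    · exact Or.inr (mem_coverF_node.2 fun hh => hmm (by rw [hm, hh]))
    · exact Or.inl (mem_coverF_node.2 hm)
  · by_cases hm : m = exIdx i j ℓ
    · right
      subst hm
      cases hb : (exIdx i j ℓ).val.testBit h.val
      · simpa using mem_coverF_f.2 hb
      · simpa using mem_coverF_t.2 hb
    · exact Or.inl (mem_coverF_node.2 hm)
  · obtain ⟨rfl, rfl⟩ | ⟨rfl, rfl⟩ | ⟨rfl, rfl⟩ | ⟨rfl, rfl⟩ := hc <;>
      cases hb : (exIdx i j ℓ).val.testBit h.val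
    · exact Or.inl (mem_coverF_f.2 hb)
    · exact Or.inr (mem_coverF_t.2 hb)
    · exact Or.inr (mem_coverF_f.2 hb)
    · exact Or.inl (mem_coverF_t.2 hb)
    · exact Or.inl (mem_coverF_f.2 hb)
    · exact Or.inr (mem_coverF_t.2 hb)
    · exact Or.inr (mem_coverF_f.2 hb)
    · exact Or.inl (mem_coverF_t.2 hb)
  · by_cases hm : m = i
    · subst hm
      by_cases hm' : m' = j
      · subst hm'; rw [hxm] at hx; exact absurd hx (by simp)
      · exact Or.inr (mem_coverF_node.2 (by simpa [exIdx] using hm'))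
    · exact Or.inl (mem_coverF_node.2 (by simpa [exIdx] using hm))
  · by_cases hm : m = i
    · subst hm
      by_cases hm' : m' = j
      · subst hm'; rw [hym] at hy; exact absurd hy (by simp)
      · exact Or.inr (mem_coverF_node.2 (by simpa [exIdx] using hm'))
    · exact Or.inl (mem_coverF_node.2 (by simpa [exIdx] using hm))

lemma coverF_card (i j : Fin k) (hk : 1 ≤ k) :
    (coverF k logk i j).card = 4 * (k - 1) + 4 * logk := by
  rw [card_decomp]
  have h1 : ∀ q : Bool × Bool,
      (Finset.univ.filter fun m : Fin k => VCVertex.node q.1 q.2 m ∈ coverF k logk i j).card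
        = k - 1 := by
    intro q
    rw [show (Finset.univ.filter fun m : Fin k =>
          VCVertex.node q.1 q.2 m ∈ coverF k logk i j)
        = Finset.univ.erase (exIdx i j q.2) from by
      ext m; simp [mem_coverF_node, Finset.mem_erase]]
    rw [Finset.card_erase_of_mem (Finset.mem_univ _), Finset.card_univ, Fintype.card_fin]
  have h2 : ∀ q : Bool × Fin logk,
      (cycFib (coverF k logk i j) q.1 q.2).card = 2 := by
    rintro ⟨ℓ, h⟩
    have hset : cycFib (coverF k logk i j) ℓ h =
        {bitNode false ℓ (exIdx i j ℓ) h, bitNode true ℓ (exIdx i j ℓ) h} := by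
      ext v
      simp only [cycFib, Finset.mem_filter, Finset.mem_insert, Finset.mem_singleton]
      constructor
      · rintro ⟨hvF, rfl | rfl | rfl | rfl⟩
        · left; rw [bitNode, if_neg (by simp [mem_coverF_f.1 hvF])]
        · left; rw [bitNode, if_pos (mem_coverF_t.1 hvF)]
        · right; rw [bitNode, if_neg (by simp [mem_coverF_f.1 hvF])]
        · right; rw [bitNode, if_pos (mem_coverF_t.1 hvF)]
      · rintro (rfl | rfl)
        · exact ⟨bitNode_mem_coverF _ _ _ _ _, by rw [bitNode]; split <;> simp⟩
        · exact ⟨bitNode_mem_coverF _ _ _ _ _, by rw [bitNode]; split <;> simp⟩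
    rw [hset, Finset.card_insert_of_notMem
      (by simp only [Finset.mem_singleton, bitNode]; split <;> simp), Finset.card_singleton]
  rw [Finset.sum_congr rfl fun q _ => h1 q, Finset.sum_congr rfl fun q _ => h2 q]
  simp only [Finset.sum_const, Finset.card_univ, Fintype.card_prod, Fintype.card_bool,
    Fintype.card_fin, smul_eq_mul]
  ring
end VCAux

/-- the vertex-cover lower-bound graph `G_{x,y}` has a vertex cover
of cardinality `4(k − 1) + 4·log k` if and only if `x` and `y` are not disjoint,
i.e. iff there is a pair `(i, j)` with `x i j = y i j = 1`. -/
theorem vcGraph_cover_iff_not_disjoint (k logk : ℕ) (hk : 2 ≤ k)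
    (hpow : k = 2 ^ logk) (x y : Fin k → Fin k → Bool) :
    (∃ U : Set (VCVertex k logk), IsVertexCover (vcGraph k logk x y) U ∧
      U.ncard = 4 * (k - 1) + 4 * logk) ↔
    ∃ i j : Fin k, x i j = true ∧ y i j = true := by
  open VCAux in
  constructor
  · rintro ⟨U, hcov, hcard⟩
    have hUfin : U.Finite := Set.toFinite U
    set F := hUfin.toFinset with hFdef
    have hcardF : F.card = 4 * (k - 1) + 4 * logk := by
      rw [← Set.ncard_eq_toFinset_card U hUfin]; exact hcard
    have hcovF : ∀ u v, (vcGraph k logk x y).Adj u v → u ∈ F ∨ v ∈ F := by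
      intro u v h
      rcases hcov u v h with h' | h'
      · exact Or.inl (hUfin.mem_toFinset.2 h')
      · exact Or.inr (hUfin.mem_toFinset.2 h')
    -- clique bounds
    have hD1 : ∀ s ℓ : Bool,
        (Finset.univ.filter fun m : Fin k => ¬ VCVertex.node s ℓ m ∈ F).card ≤ 1 := by
      intro s ℓ
      rw [Finset.card_le_one]
      intro a ha b hb
      simp only [Finset.mem_filter] at ha hb
      by_contra hab
      rcases hcovF _ _ (adj_clique hab) with h | h
      · exact ha.2 h
      · exact hb.2 h
    have hpar : ∀ s ℓ : Bool,
        (Finset.univ.filter fun m : Fin k => VCVertex.node s ℓ m ∈ F).card +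
        (Finset.univ.filter fun m : Fin k => ¬ VCVertex.node s ℓ m ∈ F).card = k := by
      intro s ℓ
      rw [Finset.card_filter_add_card_filter_not, Finset.card_univ, Fintype.card_fin]
    have hEle : ∀ s ℓ : Bool,
        k - 1 ≤ (Finset.univ.filter fun m : Fin k => VCVertex.node s ℓ m ∈ F).card := by
      intro s ℓ; have := hD1 s ℓ; have := hpar s ℓ; omega
    -- cycle bounds
    have hYle : ∀ (ℓ : Bool) (h : Fin logk), 2 ≤ (cycFib F ℓ h).card := by
      intro ℓ h
      rcases hcovF _ _ (adj_cyc1 ℓ h) with hu | hu <;>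
        rcases hcovF _ _ (adj_cyc3 ℓ h) with hv | hv
      · calc 2 = ({VCVertex.f false ℓ h, VCVertex.f true ℓ h} : Finset _).card :=
              (Finset.card_pair (by simp)).symm
          _ ≤ _ := Finset.card_le_card (by
              intro w hw
              simp only [Finset.mem_insert, Finset.mem_singleton] at hw
              rcases hw with rfl | rfl <;> simp [cycFib, Finset.mem_filter, hu, hv])
      · calc 2 = ({VCVertex.f false ℓ h, VCVertex.t true ℓ h} : Finset _).card :=
              (Finset.card_pair (by simp)).symm
          _ ≤ _ := Finset.card_le_card (by
              intro w hw
              simp only [Finset.mem_insert, Finset.mem_singleton] at hw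
              rcases hw with rfl | rfl <;> simp [cycFib, Finset.mem_filter, hu, hv])
      · calc 2 = ({VCVertex.t false ℓ h, VCVertex.f true ℓ h} : Finset _).card :=
              (Finset.card_pair (by simp)).symm
          _ ≤ _ := Finset.card_le_card (by
              intro w hw
              simp only [Finset.mem_insert, Finset.mem_singleton] at hw
              rcases hw with rfl | rfl <;> simp [cycFib, Finset.mem_filter, hu, hv])
      · calc 2 = ({VCVertex.t false ℓ h, VCVertex.t true ℓ h} : Finset _).card :=
              (Finset.card_pair (by simp)).symm
          _ ≤ _ := Finset.card_le_card (by
              intro w hw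
              simp only [Finset.mem_insert, Finset.mem_singleton] at hw
              rcases hw with rfl | rfl <;> simp [cycFib, Finset.mem_filter, hu, hv])
    -- sums
    have hdec := card_decomp F
    have hSEconst : (∑ _q : Bool × Bool, (k - 1)) = 4 * (k - 1) := by
      simp [Finset.sum_const, Finset.card_univ, mul_comm]
    have hSYconst : (∑ _q : Bool × Fin logk, 2) = 4 * logk := by
      simp only [Finset.sum_const, Finset.card_univ, Fintype.card_prod, Fintype.card_bool,
        Fintype.card_fin, smul_eq_mul]
      ring
    have hSE : 4 * (k - 1) ≤ ∑ q : Bool × Bool,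
        (Finset.univ.filter fun m : Fin k => VCVertex.node q.1 q.2 m ∈ F).card := by
      rw [← hSEconst]; exact Finset.sum_le_sum fun q _ => hEle q.1 q.2
    have hSY : 4 * logk ≤ ∑ q : Bool × Fin logk, (cycFib F q.1 q.2).card := by
      rw [← hSYconst]; exact Finset.sum_le_sum fun q _ => hYle q.1 q.2
    have hEexact : ∀ s ℓ : Bool,
        (Finset.univ.filter fun m : Fin k => VCVertex.node s ℓ m ∈ F).card = k - 1 := by
      intro s ℓ
      by_contra hne
      have hlt : k - 1 <
          (Finset.univ.filter fun m : Fin k => VCVertex.node s ℓ m ∈ F).card :=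
        lt_of_le_of_ne (hEle s ℓ) (Ne.symm hne)
      have hstrict : (∑ _q : Bool × Bool, (k - 1)) < ∑ q : Bool × Bool,
          (Finset.univ.filter fun m : Fin k => VCVertex.node q.1 q.2 m ∈ F).card :=
        Finset.sum_lt_sum (fun q _ => hEle q.1 q.2) ⟨(s, ℓ), Finset.mem_univ _, hlt⟩
      rw [hSEconst] at hstrict
      omega
    have hYexact : ∀ (ℓ : Bool) (h : Fin logk), (cycFib F ℓ h).card = 2 := by
      intro ℓ h
      by_contra hne
      have hlt : 2 < (cycFib F ℓ h).card := lt_of_le_of_ne (hYle ℓ h) (Ne.symm hne)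
      have hstrict : (∑ _q : Bool × Fin logk, 2) < ∑ q : Bool × Fin logk,
          (cycFib F q.1 q.2).card :=
        Finset.sum_lt_sum (fun q _ => hYle q.1 q.2) ⟨(ℓ, h), Finset.mem_univ _, hlt⟩
      rw [hSYconst] at hstrict
      have hSE' : (∑ q : Bool × Bool,
          (Finset.univ.filter fun m : Fin k => VCVertex.node q.1 q.2 m ∈ F).card)
          = 4 * (k - 1) := Finset.sum_congr rfl (fun q _ => hEexact q.1 q.2) |>.trans hSEconst
      omega
    -- missing nodes
    have hmiss : ∀ s ℓ : Bool, ∃ m : Fin k, VCVertex.node s ℓ m ∉ F ∧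
        ∀ m', VCVertex.node s ℓ m' ∉ F → m' = m := by
      intro s ℓ
      have hDcard : (Finset.univ.filter fun m : Fin k => ¬ VCVertex.node s ℓ m ∈ F).card = 1 := by
        have := hpar s ℓ; have := hEexact s ℓ; omega
      obtain ⟨m, hm⟩ := Finset.card_eq_one.1 hDcard
      refine ⟨m, ?_, ?_⟩
      · have : m ∈ Finset.univ.filter fun m : Fin k => ¬ VCVertex.node s ℓ m ∈ F := by
          rw [hm]; exact Finset.mem_singleton_self m
        exact (Finset.mem_filter.1 this).2
      · intro m' hm'
        have : m' ∈ Finset.univ.filter fun m : Fin k => ¬ VCVertex.node s ℓ m ∈ F :=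
          Finset.mem_filter.2 ⟨Finset.mem_univ _, hm'⟩
        rw [hm] at this
        exact Finset.mem_singleton.1 this
    obtain ⟨m00, h00, -⟩ := hmiss false false
    obtain ⟨m01, h01, -⟩ := hmiss false true
    obtain ⟨m10, h10, -⟩ := hmiss true false
    obtain ⟨m11, h11, -⟩ := hmiss true true
    -- bits agree
    have hbit : ∀ (ℓ : Bool) (ma mb : Fin k), VCVertex.node false ℓ ma ∉ F →
        VCVertex.node true ℓ mb ∉ F → ∀ h : Fin logk,
        ma.val.testBit h.val = mb.val.testBit h.val := by
      intro ℓ ma mb hma hmb h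
      have hva : bitNode false ℓ ma h ∈ F := (hcovF _ _ (adj_bin false ℓ ma h)).resolve_left hma
      have hvb : bitNode true ℓ mb h ∈ F := (hcovF _ _ (adj_bin true ℓ mb h)).resolve_left hmb
      have hY2 := hYexact ℓ h
      cases hba : ma.val.testBit h.val <;> cases hbb : mb.val.testBit h.val <;>
          simp only [bitNode, hba, hbb, if_true, if_false, Bool.false_eq_true,
            Bool.true_eq_false, ite_true, ite_false] at hva hvb ⊢
      · -- ma bit false (f false ℓ h ∈ F), mb bit true (t true ℓ h ∈ F)
        exfalso
        rcases hcovF _ _ (adj_cyc2 ℓ h) with hw | hw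
        · have hsub : ({VCVertex.f false ℓ h, VCVertex.t true ℓ h, VCVertex.t false ℓ h} :
              Finset (VCVertex k logk)) ⊆ cycFib F ℓ h := by
            intro z hz
            simp only [Finset.mem_insert, Finset.mem_singleton] at hz
            rcases hz with rfl | rfl | rfl <;> simp [cycFib, Finset.mem_filter, hva, hvb, hw]
          have h3 : ({VCVertex.f false ℓ h, VCVertex.t true ℓ h, VCVertex.t false ℓ h} :
              Finset (VCVertex k logk)).card = 3 := by
            rw [Finset.card_insert_of_notMem (by simp), Finset.card_insert_of_notMem (by simp),
              Finset.card_singleton]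
          have := Finset.card_le_card hsub
          omega
        · have hsub : ({VCVertex.f false ℓ h, VCVertex.t true ℓ h, VCVertex.f true ℓ h} :
              Finset (VCVertex k logk)) ⊆ cycFib F ℓ h := by
            intro z hz
            simp only [Finset.mem_insert, Finset.mem_singleton] at hz
            rcases hz with rfl | rfl | rfl <;> simp [cycFib, Finset.mem_filter, hva, hvb, hw]
          have h3 : ({VCVertex.f false ℓ h, VCVertex.t true ℓ h, VCVertex.f true ℓ h} :
              Finset (VCVertex k logk)).card = 3 := by
            rw [Finset.card_insert_of_notMem (by simp), Finset.card_insert_of_notMem (by simp),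
              Finset.card_singleton]
          have := Finset.card_le_card hsub
          omega
      · -- ma bit true (t false ℓ h ∈ F), mb bit false (f true ℓ h ∈ F)
        exfalso
        rcases hcovF _ _ (adj_cyc4 ℓ h) with hw | hw
        · have hsub : ({VCVertex.t false ℓ h, VCVertex.f true ℓ h, VCVertex.t true ℓ h} :
              Finset (VCVertex k logk)) ⊆ cycFib F ℓ h := by
            intro z hz
            simp only [Finset.mem_insert, Finset.mem_singleton] at hz
            rcases hz with rfl | rfl | rfl <;> simp [cycFib, Finset.mem_filter, hva, hvb, hw]
          have h3 : ({VCVertex.t false ℓ h, VCVertex.f true ℓ h, VCVertex.t true ℓ h} :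
              Finset (VCVertex k logk)).card = 3 := by
            rw [Finset.card_insert_of_notMem (by simp), Finset.card_insert_of_notMem (by simp),
              Finset.card_singleton]
          have := Finset.card_le_card hsub
          omega
        · have hsub : ({VCVertex.t false ℓ h, VCVertex.f true ℓ h, VCVertex.f false ℓ h} :
              Finset (VCVertex k logk)) ⊆ cycFib F ℓ h := by
            intro z hz
            simp only [Finset.mem_insert, Finset.mem_singleton] at hz
            rcases hz with rfl | rfl | rfl <;> simp [cycFib, Finset.mem_filter, hva, hvb, hw]
          have h3 : ({VCVertex.t false ℓ h, VCVertex.f true ℓ h, VCVertex.f false ℓ h} :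
              Finset (VCVertex k logk)).card = 3 := by
            rw [Finset.card_insert_of_notMem (by simp), Finset.card_insert_of_notMem (by simp),
              Finset.card_singleton]
          have := Finset.card_le_card hsub
          omega
    have heq : ∀ (ma mb : Fin k),
        (∀ h : Fin logk, ma.val.testBit h.val = mb.val.testBit h.val) → ma = mb := by
      intro ma mb hh
      apply Fin.ext
      apply Nat.eq_of_testBit_eq
      intro n
      by_cases hn : n < logk
      · exact hh ⟨n, hn⟩
      · have hk2 : k ≤ 2 ^ n :=
          hpow.le.trans (Nat.pow_le_pow_right (by norm_num) (Nat.le_of_not_lt hn))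
        rw [Nat.testBit_lt_two_pow (ma.isLt.trans_le hk2),
          Nat.testBit_lt_two_pow (mb.isLt.trans_le hk2)]
    have e0 : m00 = m10 := heq _ _ (hbit false m00 m10 h00 h10)
    have e1 : m01 = m11 := heq _ _ (hbit true m01 m11 h01 h11)
    have hxv : x m00 m01 = true := by
      cases hxc : x m00 m01
      · rcases hcovF _ _ (adj_x hxc) with h | h
        · exact absurd h h00
        · exact absurd h h01
      · rfl
    have hyv : y m10 m11 = true := by
      cases hyc : y m10 m11
      · rcases hcovF _ _ (adj_y hyc) with h | h
        · exact absurd h h10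
        · exact absurd h h11
      · rfl
    exact ⟨m00, m01, hxv, by rw [e0, e1]; exact hyv⟩
  · rintro ⟨i, j, hx, hy⟩
    refine ⟨↑(coverF k logk i j), ?_, ?_⟩
    · intro u v hadj
      rw [vc_adj] at hadj
      obtain ⟨hne, hrel | hrel⟩ := hadj
      · rcases cover_rel hx hy hrel with h | h
        · exact Or.inl (Finset.mem_coe.2 h)
        · exact Or.inr (Finset.mem_coe.2 h)
      · rcases cover_rel hx hy hrel with h | h
        · exact Or.inr (Finset.mem_coe.2 h)
        · exact Or.inl (Finset.mem_coe.2 h)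
    · rw [Set.ncard_coe_finset]
      exact coverF_card i j (by omega)
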